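/- arXiv:2005.05959 — 3 statements merged into one kernel-verified Lean document; each statement's English description precedes it below -/
import Mathlib

section
/- Let R ⊆ T be a ring extension such that R ∈ H and Spec(R) = Spec(T). Then R is a φ-pseudo-valuation ring if and only if T is a φ-pseudo-valuation ring. -/
/-!
`Spec(R) = Spec(T)` puts every non-unit of `T` into `R`, since it lies in a maximal ideal of `T`,
which is a prime ideal of `R`. Hence `Nil(T) = Nil(R)`, `T ∈ H`, and the induced map
`ψ : R_{Nil(R)} → T_{Nil(T)}` is injective: if `u r = 0` with `r ∈ R` and `u ∉ Nil(T)`, then `u`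
is either a unit of `T` or an element of `R \ Nil(R)`. An element `t/u` of `T_{Nil(T)}` lies in
the image of `ψ` unless `t` is a unit, and then its inverse `u t⁻¹ / 1` comes from `T`.
Corresponding primes `P = Q` satisfy `φ(Q) = ψ(φ(P))`, and `φ(Q)` is stable under multiplication
by elements of `T`, so `φ`-strong primality passes from `P` to `Q` and back.
-/

/-- A subset `S` of a ring `A` is (the underlying set of) a prime ideal of the subring `B`. -/
def IsPrimeIdealSetOf {A : Type*} [CommRing A] (B : Subring A) (S : Set A) : Prop :=
  ∃ I : Ideal B, I.IsPrime ∧ Subtype.val '' (I : Set B) = S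

/-- `Spec(R) = Spec(T)` for a subring `R` of `T`: a subset of `T` is a prime ideal of `T`
iff it is a prime ideal of `R`. -/
def SpecEq {T : Type*} [CommRing T] (R : Subring T) : Prop :=
  ∀ S : Set T, (∃ J : Ideal T, J.IsPrime ∧ (J : Set T) = S) ↔ IsPrimeIdealSetOf R S
/-- An ideal `P` of `R` is divided if it is comparable with every ideal of `R`. -/
def Ideal.IsDivided {R : Type*} [CommRing R] (P : Ideal R) : Prop :=
  ∀ I : Ideal R, I ≤ P ∨ P ≤ I

/-- `R ∈ H` : the nilradical of `R` is a divided prime ideal. -/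
def MemH (R : Type*) [CommRing R] : Prop :=
  (nilradical R).IsPrime ∧ (nilradical R).IsDivided
/-- The localization `R_{Nil(R)}` of `R` at its nilradical, given that the nilradical
is prime. -/
abbrev LocAtNil (R : Type*) [CommRing R] (hp : (nilradical R).IsPrime) :=
  Localization (@Ideal.primeCompl R _ (nilradical R) hp)

/-- `φ(S)` : the image in `R_{Nil(R)}` of a subset `S ⊆ R` under the canonical map `r ↦ r/1`
(the restriction to `R` of the homomorphism `φ : T(R) → R_{Nil(R)}`). -/
def phiImage (R : Type*) [CommRing R] (hp : (nilradical R).IsPrime) (S : Set R) :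
    Set (LocAtNil R hp) :=
  algebraMap R (LocAtNil R hp) '' S

/-- An ideal `P` of `R` is φ-strongly prime: for `x, y ∈ R_{Nil(R)}`, `xy ∈ φ(P)` implies
`x ∈ φ(P)` or `y ∈ φ(P)`. -/
def PhiStronglyPrime {R : Type*} [CommRing R] (hp : (nilradical R).IsPrime) (P : Ideal R) :
    Prop :=
  ∀ x y : LocAtNil R hp, x * y ∈ phiImage R hp ↑P →
    x ∈ phiImage R hp ↑P ∨ y ∈ phiImage R hp ↑P

/-- `R` is a φ-pseudo-valuation ring: `R ∈ H` and every prime ideal of `R` is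
φ-strongly prime. -/
def PhiPVR (R : Type*) [CommRing R] : Prop :=
  ∃ h : MemH R, ∀ P : Ideal R, P.IsPrime → PhiStronglyPrime h.1 P

def Set.IsMulPrime {M : Type*} [Mul M] (A : Set M) : Prop :=
  ∀ x y, x * y ∈ A → x ∈ A ∨ y ∈ A

section IsMulPrime

variable {M N F : Type*} [Mul M] [FunLike F M N] {f : F} {A : Set M}

theorem Set.IsMulPrime.of_image [Mul N] [MulHomClass F M N] (hf : Function.Injective f)
    (h : (f '' A).IsMulPrime) : A.IsMulPrime := fun x y hxy ↦
  (h _ _ (map_mul f x y ▸ Set.mem_image_of_mem f hxy)).imp hf.mem_set_image.mp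
    hf.mem_set_image.mp

theorem Set.IsMulPrime.image [CommMonoid N] [MulHomClass F M N] (hf : Function.Injective f)
    (hA : A.IsMulPrime)
    (hcover : ∀ x, x ∈ Set.range f ∨ ∃ w, x * w = 1 ∧ ∀ b ∈ f '' A, w * b ∈ f '' A) :
    (f '' A).IsMulPrime := by
  intro x y hxy
  rcases hcover x with ⟨a, rfl⟩ | ⟨w, hxw, hw⟩
  · rcases hcover y with ⟨b, rfl⟩ | ⟨w, hyw, hw⟩
    · rw [← map_mul, hf.mem_set_image] at hxy
      exact (hA a b hxy).imp (Set.mem_image_of_mem f) (Set.mem_image_of_mem f)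
    · left
      rw [← mul_one (f a), ← hyw, ← mul_assoc, mul_comm]
      exact hw _ hxy
  · right
    rw [← one_mul y, ← hxw, mul_comm x, mul_assoc]
    exact hw _ hxy

end IsMulPrime

theorem algebraMap_mul_mem_phiImage {A : Type*} [CommRing A] (hp : (nilradical A).IsPrime)
    (I : Ideal A) (w : A) {b : LocAtNil A hp} (hb : b ∈ phiImage A hp I) :
    algebraMap A _ w * b ∈ phiImage A hp I := by
  obtain ⟨q, hq, rfl⟩ := hb
  exact ⟨w * q, I.mul_mem_left w hq, map_mul _ w q⟩

theorem Subring.coe_mem_nilradical_iff {T : Type*} [CommRing T] {R : Subring T} {r : R} :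
    (r : T) ∈ nilradical T ↔ r ∈ nilradical R :=
  IsNilpotent.map_iff (f := R.subtype) Subtype.val_injective

theorem Subring.comap_subtype_nilradical {T : Type*} [CommRing T] (R : Subring T) :
    (nilradical T).comap R.subtype = nilradical R :=
  Ideal.ext fun _ ↦ coe_mem_nilradical_iff

namespace SpecEq

variable {T : Type*} [CommRing T] {R : Subring T}

theorem mem_of_not_isUnit (hspec : SpecEq R) {t : T} (ht : ¬IsUnit t) : t ∈ R := by
  obtain ⟨M, hM, htM⟩ := Ideal.exists_le_maximal (Ideal.span {t})
    (mt Ideal.span_singleton_eq_top.mp ht)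
  obtain ⟨P, -, hPM⟩ := (hspec M).mp ⟨M, hM.isPrime, rfl⟩
  obtain ⟨r, -, rfl⟩ : t ∈ Subtype.val '' (P : Set R) :=
    hPM ▸ htM (Ideal.mem_span_singleton_self t)
  exact r.2

theorem coe_subset_of_ne_top (hspec : SpecEq R) {I : Ideal T} (hI : I ≠ ⊤) :
    (I : Set T) ⊆ R :=
  fun _ ht ↦ hspec.mem_of_not_isUnit fun hu ↦ hI (I.eq_top_of_isUnit_mem ht hu)

theorem isPrime_nilradical_and_coe_eq (hspec : SpecEq R) (hR : (nilradical R).IsPrime) :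
    (nilradical T).IsPrime ∧
      (nilradical T : Set T) = Subtype.val '' (nilradical R : Set R) := by
  obtain ⟨J, hJ, hJR⟩ := (hspec _).mpr ⟨nilradical R, hR, rfl⟩
  have hJ_le : J ≤ nilradical T := by
    intro t ht
    obtain ⟨r, hr, rfl⟩ : t ∈ Subtype.val '' (nilradical R : Set R) := hJR ▸ ht
    exact Subring.coe_mem_nilradical_iff.mpr hr
  obtain rfl : nilradical T = J := le_antisymm (nilradical_le_prime J) hJ_le
  exact ⟨hJ, hJR⟩

theorem memH (hspec : SpecEq R) (hR : MemH R) : MemH T := by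
  obtain ⟨hT, hnil⟩ := hspec.isPrime_nilradical_and_coe_eq hR.1
  refine ⟨hT, fun I ↦ ?_⟩
  rcases eq_or_ne I ⊤ with rfl | hI
  · exact Or.inr le_top
  have hIR := hspec.coe_subset_of_ne_top hI
  refine (hR.2 (I.comap R.subtype)).imp (fun hle t ht ↦ ?_) (fun hle t ht ↦ ?_)
  · exact Subring.coe_mem_nilradical_iff.mpr (hle (show (⟨t, hIR ht⟩ : R) ∈ _ from ht))
  · obtain ⟨r, hr, rfl⟩ : t ∈ Subtype.val '' (nilradical R : Set R) := hnil ▸ ht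
    exact hle hr

end SpecEq

section LocAtNil

variable {T : Type*} [CommRing T] (R : Subring T) (hR : (nilradical R).IsPrime)
  (hT : (nilradical T).IsPrime)

noncomputable def Subring.locAtNilMap : LocAtNil R hR →+* LocAtNil T hT :=
  haveI := hR
  haveI := hT
  Localization.localRingHom _ _ R.subtype R.comap_subtype_nilradical.symm

theorem Subring.locAtNilMap_algebraMap (r : R) :
    R.locAtNilMap hR hT (algebraMap R _ r) = algebraMap T _ r :=
  haveI := hR
  haveI := hT
  Localization.localRingHom_to_map _ _ _ _ r

theorem Subring.locAtNilMap_mk' (r : R) (s : (nilradical R).primeCompl) :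
    R.locAtNilMap hR hT (IsLocalization.mk' _ r s) =
      IsLocalization.mk' _ (r : T)
        (⟨s, fun h ↦ s.2 (coe_mem_nilradical_iff.mp h)⟩ : (nilradical T).primeCompl) :=
  haveI := hR
  haveI := hT
  Localization.localRingHom_mk' _ _ _ _ r s

variable {R}

theorem SpecEq.locAtNilMap_injective (hspec : SpecEq R) :
    Function.Injective (R.locAtNilMap hR hT) := by
  refine (injective_iff_map_eq_zero _).mpr fun x hx ↦ ?_
  obtain ⟨⟨r, s⟩, rfl⟩ := IsLocalization.mk'_surjective (nilradical R).primeCompl x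
  rw [R.locAtNilMap_mk', IsLocalization.mk'_eq_zero_iff] at hx
  obtain ⟨⟨u, hu⟩, hur⟩ := hx
  rw [IsLocalization.mk'_eq_zero_iff]
  by_cases hunit : IsUnit u
  · exact ⟨1, Subtype.ext (by simpa using hunit.mul_right_eq_zero.mp hur)⟩
  · exact ⟨⟨⟨u, hspec.mem_of_not_isUnit hunit⟩, fun h ↦ hu (Subring.coe_mem_nilradical_iff.mpr h)⟩,
      Subtype.ext hur⟩

theorem SpecEq.mem_range_locAtNilMap_or_exists_mul_eq_one (hspec : SpecEq R)
    (x : LocAtNil T hT) :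
    x ∈ (R.locAtNilMap hR hT).range ∨ ∃ w : T, x * algebraMap T _ w = 1 := by
  obtain ⟨⟨t, u⟩, rfl⟩ := IsLocalization.mk'_surjective (nilradical T).primeCompl x
  by_cases ht : IsUnit t
  · obtain ⟨v, rfl⟩ := ht
    refine Or.inr ⟨u * ↑v⁻¹, ?_⟩
    rw [mul_comm, IsLocalization.mul_mk'_eq_mk'_of_mul, mul_assoc, Units.inv_mul, mul_one,
      IsLocalization.mk'_self']
  left
  by_cases hu : (u : T) ∈ R
  · exact ⟨IsLocalization.mk' _ (⟨t, hspec.mem_of_not_isUnit ht⟩ : R)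
      (⟨⟨u, hu⟩, fun h ↦ u.2 (Subring.coe_mem_nilradical_iff.mpr h)⟩ : (nilradical R).primeCompl),
      R.locAtNilMap_mk' hR hT _ _⟩
  · obtain ⟨v, hv⟩ : IsUnit (u : T) := not_not.mp (mt hspec.mem_of_not_isUnit hu)
    have htv : ¬IsUnit (t * ↑v⁻¹) := fun h ↦ ht (by simpa using h.mul v.isUnit)
    refine ⟨algebraMap R _ ⟨_, hspec.mem_of_not_isUnit htv⟩, ?_⟩
    rw [R.locAtNilMap_algebraMap, IsLocalization.eq_mk'_iff_mul_eq, ← map_mul, ← hv,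
      mul_assoc, Units.inv_mul, mul_one]

variable (R) in
theorem Subring.image_locAtNilMap_phiImage (S : Set R) :
    R.locAtNilMap hR hT '' phiImage R hR S = phiImage T hT (Subtype.val '' S) := by
  simp only [phiImage, Set.image_image, R.locAtNilMap_algebraMap]

theorem SpecEq.phiStronglyPrime_iff (hspec : SpecEq R) {P : Ideal R} {Q : Ideal T}
    (hPQ : (Q : Set T) = Subtype.val '' (P : Set R)) :
    PhiStronglyPrime hR P ↔ PhiStronglyPrime hT Q := by
  have himage : R.locAtNilMap hR hT '' phiImage R hR P = phiImage T hT Q := by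
    rw [hPQ, R.image_locAtNilMap_phiImage]
  have hinj := hspec.locAtNilMap_injective hR hT
  change (phiImage R hR P).IsMulPrime ↔ (phiImage T hT Q).IsMulPrime
  rw [← himage]
  refine ⟨fun h ↦ h.image hinj fun x ↦ ?_, .of_image hinj⟩
  refine (hspec.mem_range_locAtNilMap_or_exists_mul_eq_one hR hT x).imp_right ?_
  rintro ⟨w, hw⟩
  exact ⟨_, hw, himage ▸ fun b ↦ algebraMap_mul_mem_phiImage hT Q w⟩

end LocAtNil

/-- Let `R ⊆ T` with `R ∈ H` and `Spec(R) = Spec(T)`.  Then `R` is a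
φ-PVR iff `T` is a φ-PVR. -/
theorem stmt3 {T : Type*} [CommRing T] (R : Subring T)
    (hR : MemH ↥R) (hspec : SpecEq R) : PhiPVR ↥R ↔ PhiPVR T := by
  have hT := hspec.memH hR
  constructor
  · rintro ⟨_, hprime⟩
    refine ⟨hT, fun Q hQ ↦ ?_⟩
    obtain ⟨P, hP, hPQ⟩ := (hspec Q).mp ⟨Q, hQ, rfl⟩
    exact (hspec.phiStronglyPrime_iff hR.1 hT.1 hPQ.symm).mp (hprime P hP)
  · rintro ⟨_, hprime⟩
    refine ⟨hR, fun P hP ↦ ?_⟩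
    obtain ⟨Q, hQ, hQP⟩ := (hspec _).mpr ⟨P, hP, rfl⟩
    exact (hspec.phiStronglyPrime_iff hR.1 hT.1 hQP).mpr (hprime Q hQ)
end

section
/- Let R ⊆ T be commutative rings such that Spec(R) = Spec(T). Then for each non-maximal prime ideal P of R, the localization R_P equals the localization T_{T\P} (i.e., the canonical map R_P → T_{T\P} is an isomorphism). -/
/-!
Since every prime of `T` is a prime of `R`, every prime of `T` lies inside `R`, so every element of
`T` outside `R` is a unit. If `P` is not maximal, pick `u ∈ M ∖ P` for a maximal ideal `M ⊋ P`;
`M` is also a prime of `T`, so `uT ⊆ M ⊆ R`. Then a fraction `t / s` of `T_{T∖P}` equals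
`(ut) / (us)` with `ut, us ∈ R` and `us ∉ P`, and a denominator `c ∉ P` of `T` is either a unit or
lies in `R ∖ P`. Hence `T_{T∖P}` is already a localization of `R` at `P`.
-/

section LocalizationOfExtension

variable {A B L : Type*} [CommRing A] [CommRing B] [CommRing L]
  [Algebra A B] [Algebra B L] [Algebra A L] [IsScalarTower A B L]
  {M : Submonoid A} {N : Submonoid B} [IsLocalization N L]

theorem IsLocalization.of_injective_of_exists_mul_eq
    (hinj : Function.Injective (algebraMap A B))
    (hMN : M ≤ N.comap (algebraMap A B))
    (hN : ∀ n ∈ N, IsUnit n ∨ n ∈ M.map (algebraMap A B))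
    (hfrac : ∀ (b : B) (s : N), ∃ (a : A) (m : M), b * algebraMap A B m = algebraMap A B a * s) :
    IsLocalization M L where
  map_units m := by
    rw [IsScalarTower.algebraMap_apply A B L]
    exact IsLocalization.map_units L (⟨_, hMN m.2⟩ : N)
  surj z := by
    obtain ⟨⟨b, s⟩, hz⟩ := IsLocalization.surj N z
    obtain ⟨a, m, hbm⟩ := hfrac b s
    refine ⟨⟨a, m⟩, (IsLocalization.map_units L s).mul_right_cancel ?_⟩
    simp only [IsScalarTower.algebraMap_apply A B L] at hz ⊢
    calc z * algebraMap B L (algebraMap A B m) * algebraMap B L s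
        = algebraMap B L (b * algebraMap A B m) := by rw [map_mul, ← hz]; ring
      _ = algebraMap B L (algebraMap A B a) * algebraMap B L s := by rw [hbm, map_mul]
  exists_of_eq {a₁ a₂} h := by
    rw [IsScalarTower.algebraMap_apply A B L, IsScalarTower.algebraMap_apply A B L,
      IsLocalization.eq_iff_exists N L] at h
    obtain ⟨c, hc⟩ := h
    rcases hN c c.2 with hunit | ⟨m, hm, hmc⟩
    · exact ⟨1, by rw [hinj (hunit.mul_left_cancel hc)]⟩
    · refine ⟨⟨m, hm⟩, hinj ?_⟩
      simpa only [map_mul, hmc] using hc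

end LocalizationOfExtension

namespace SpecEq

variable {T : Type*} [CommRing T] {R : Subring T}

theorem coe_subset_of_isPrime (hspec : SpecEq R) {J : Ideal T} (hJ : J.IsPrime) :
    (J : Set T) ⊆ R := by
  obtain ⟨I, -, hIJ⟩ := (hspec J).mp ⟨J, hJ, rfl⟩
  rw [← hIJ]
  rintro _ ⟨x, -, rfl⟩
  exact x.2

theorem isUnit_of_notMem (hspec : SpecEq R) {t : T} (ht : t ∉ R) : IsUnit t := by
  by_contra hunit
  obtain ⟨J, hJ, htJ⟩ := exists_max_ideal_of_mem_nonunits hunit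
  exact ht (hspec.coe_subset_of_isPrime hJ.isPrime htJ)

theorem exists_notMem_forall_mul_mem (hspec : SpecEq R) {P : Ideal R} [P.IsPrime]
    (hP : ¬ P.IsMaximal) : ∃ u : R, u ∉ P ∧ ∀ t : T, (u : T) * t ∈ R := by
  obtain ⟨M, hM, hPM⟩ := P.exists_le_maximal Ideal.IsPrime.ne_top'
  obtain ⟨u, huM, huP⟩ := SetLike.exists_of_lt (lt_of_le_of_ne hPM fun h => hP (h ▸ hM))
  obtain ⟨J, hJ, hJM⟩ := (hspec (Subtype.val '' (M : Set R))).mpr ⟨M, hM.isPrime, rfl⟩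
  have huJ : (u : T) ∈ J := by
    rw [← SetLike.mem_coe, hJM]
    exact ⟨u, huM, rfl⟩
  exact ⟨u, huP, fun t => hspec.coe_subset_of_isPrime hJ (J.mul_mem_right t huJ)⟩

end SpecEq

/-- Let `R ⊆ T` with `Spec(R) = Spec(T)` and let `P` be a non-maximal
prime ideal of `R`.  Then `R_P = T_{T∖P}`: for the prime ideal `Q` of `T` whose underlying
set is that of `P`, the canonical map `R_P → T_{T∖P}` (induced by the inclusion `R → T`)
is an isomorphism. -/
theorem stmt8 {T : Type*} [CommRing T] (R : Subring T) (hspec : SpecEq R)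
    (P : Ideal ↥R) (hP : P.IsPrime) (hPnm : ¬ P.IsMaximal)
    (Q : Ideal T) (hQ : Q.IsPrime)
    (hQP : (Q : Set T) = Subtype.val '' (P : Set ↥R))
    (hle : @Ideal.primeCompl ↥R _ P hP ≤
      (@Ideal.primeCompl T _ Q hQ).comap R.subtype) :
    Function.Bijective
      (IsLocalization.map (M := @Ideal.primeCompl ↥R _ P hP)
        (T := @Ideal.primeCompl T _ Q hQ)
        (S := Localization (@Ideal.primeCompl ↥R _ P hP))
        (Localization (@Ideal.primeCompl T _ Q hQ)) R.subtype hle) := by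
  have hmem (r : R) : (r : T) ∈ Q ↔ r ∈ P :=
    (Set.ext_iff.mp hQP r).trans Subtype.val_injective.mem_set_image
  obtain ⟨u, huP, hu⟩ := hspec.exists_notMem_forall_mul_mem hPnm
  have : IsLocalization P.primeCompl (Localization Q.primeCompl) := by
    refine IsLocalization.of_injective_of_exists_mul_eq Subtype.val_injective hle
      (fun c hc => ?_) (fun b s => ?_)
    · by_cases hcR : c ∈ R
      · exact .inr ⟨⟨c, hcR⟩, fun h => hc ((hmem _).mpr h), rfl⟩
      · exact .inl (hspec.isUnit_of_notMem hcR)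
    · have hus : ⟨_, hu s⟩ ∉ P := fun h =>
        s.2 ((hQ.mem_or_mem ((hmem _).mpr h)).resolve_left ((hmem u).not.mpr huP))
      exact ⟨⟨_, hu b⟩, ⟨⟨_, hu s⟩, hus⟩, show b * (u * s) = u * b * s by ring⟩
  exact IsLocalization.bijective P.primeCompl _ (IsLocalization.map_comp hle)
end

section
/- Let R be a local ring with maximal ideal M such that M contains a non-zero-divisor of R. If M is not a divisorial ideal of R, then (R : M) = (M : M). -/
/-- The colon construction `(J₁ : J₂) = {x ∈ T(R) : x·J₂ ⊆ J₁}` for subsets of the total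
quotient ring `T(R)`. -/
def colonSet (R : Type*) [CommRing R] (J₁ J₂ : Set (FractionRing R)) :
    Set (FractionRing R) :=
  {x : FractionRing R | ∀ j ∈ J₂, x * j ∈ J₁}

/-- The image of `R` in its total quotient ring `T(R)`, as a set. -/
def Rset (R : Type*) [CommRing R] : Set (FractionRing R) :=
  Set.range (algebraMap R (FractionRing R))

/-- The image of an ideal of `R` in the total quotient ring `T(R)`. -/
def idealSet (R : Type*) [CommRing R] (I : Ideal R) : Set (FractionRing R) :=
  algebraMap R (FractionRing R) '' (I : Set R)

/-- An ideal `I` of `R` is divisorial if `I = (R : (R : I))`. -/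
def IsDivisorial (R : Type*) [CommRing R] (I : Ideal R) : Prop :=
  idealSet R I = colonSet R (Rset R) (colonSet R (Rset R) (idealSet R I))

/-! If some `y ∈ (R : M)` does not map `M` into `M`, then `y m₀` is a unit of `R` for some
`m₀ ∈ M`, so `y m = 1` for some `m ∈ M`. Every `z ∈ (R : (R : M))` then satisfies
`z = (z y) m ∈ R M = M`, i.e. `M` is divisorial. -/

section Colon

variable {R : Type*} [CommRing R]

theorem colonSet_mono_left {J₁ J₁' : Set (FractionRing R)} (h : J₁ ⊆ J₁')
    (J₂ : Set (FractionRing R)) : colonSet R J₁ J₂ ⊆ colonSet R J₁' J₂ :=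
  fun _ hx j hj => h (hx j hj)

theorem idealSet_subset_Rset (I : Ideal R) : idealSet R I ⊆ Rset R :=
  Set.image_subset_range _ _

theorem idealSet_subset_colonSet_colonSet (I : Ideal R) :
    idealSet R I ⊆ colonSet R (Rset R) (colonSet R (Rset R) (idealSet R I)) := by
  rintro _ ⟨a, ha, rfl⟩ w hw
  obtain ⟨s, hs⟩ := hw _ ⟨a, ha, rfl⟩
  exact ⟨s, by rw [hs, mul_comm]⟩

theorem isDivisorial_of_mul_eq_one {I : Ideal R} {y : FractionRing R}
    (hy : y ∈ colonSet R (Rset R) (idealSet R I)) {m : R} (hm : m ∈ I)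
    (hym : y * algebraMap R (FractionRing R) m = 1) : IsDivisorial R I := by
  refine (idealSet_subset_colonSet_colonSet I).antisymm fun z hz => ?_
  obtain ⟨r, hr⟩ := hz y hy
  refine ⟨r * m, I.mul_mem_left r hm, ?_⟩
  rw [map_mul, hr, mul_assoc, hym, mul_one]

end Colon

open IsLocalRing in
theorem exists_mem_maximalIdeal_mul_eq_one {R : Type*} [CommRing R] [IsLocalRing R]
    {y : FractionRing R} (hy : y ∈ colonSet R (Rset R) (idealSet R (maximalIdeal R)))
    (hy' : y ∉ colonSet R (idealSet R (maximalIdeal R)) (idealSet R (maximalIdeal R))) :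
    ∃ m ∈ maximalIdeal R, y * algebraMap R (FractionRing R) m = 1 := by
  simp only [colonSet, Set.mem_ofPred_eq, not_forall] at hy'
  obtain ⟨_, ⟨m₀, hm₀, rfl⟩, hnotM⟩ := hy'
  obtain ⟨r, hr⟩ := hy _ ⟨m₀, hm₀, rfl⟩
  obtain ⟨u, rfl⟩ : IsUnit r :=
    not_not.mp fun hr' => hnotM ⟨r, (mem_maximalIdeal r).mpr hr', hr⟩
  refine ⟨m₀ * ↑u⁻¹, (maximalIdeal R).mul_mem_right _ hm₀, ?_⟩
  rw [map_mul, ← mul_assoc, ← hr, ← map_mul, Units.mul_inv, map_one]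

open IsLocalRing in
theorem stmt17_general {R : Type*} [CommRing R] [IsLocalRing R]
    (hdiv : ¬ IsDivisorial R (maximalIdeal R)) :
    colonSet R (Rset R) (idealSet R (maximalIdeal R)) =
      colonSet R (idealSet R (maximalIdeal R)) (idealSet R (maximalIdeal R)) := by
  refine Set.Subset.antisymm (fun y hy => ?_)
    (colonSet_mono_left (idealSet_subset_Rset _) _)
  by_contra hy'
  obtain ⟨m, hm, hym⟩ := exists_mem_maximalIdeal_mul_eq_one hy hy'
  exact hdiv (isDivisorial_of_mul_eq_one hy hm hym)

open IsLocalRing in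
/-- Let `R` be a local ring whose maximal ideal `M` contains a
non-zero-divisor of `R`.  If `M` is not divisorial, then `(R : M) = (M : M)`. -/
theorem stmt17 {R : Type*} [CommRing R] [IsLocalRing R]
    (hreg : ∃ x ∈ maximalIdeal R, x ∈ nonZeroDivisors R)
    (hdiv : ¬ IsDivisorial R (maximalIdeal R)) :
    colonSet R (Rset R) (idealSet R (maximalIdeal R)) =
      colonSet R (idealSet R (maximalIdeal R)) (idealSet R (maximalIdeal R)) :=
  stmt17_general hdiv
end
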